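/- arXiv:2001.02061 — 4 statements merged into one kernel-verified Lean document; each statement's English description precedes it below -/
import Mathlib

section
/- For a 2×2 real matrix A = [[a₁,b₁],[b₂,a₂]], every SRG point z_A(x) with x ≠ 0 lies on one of the two circles in ℂ centered at ((a₁+a₂)/2, ±(b₁−b₂)/2) with radius √(((a₁−a₂)/2)² + ((b₁+b₂)/2)²). -/
open Matrix
open scoped RealInnerProductSpace

noncomputable def mulVecE {ι : Type*} [Fintype ι] (A : Matrix ι ι ℝ)
    (x : EuclideanSpace ℝ ι) : EuclideanSpace ℝ ι := WithLp.toLp 2 (A.mulVec x)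

open Classical in
noncomputable def ang {ι : Type*} [Fintype ι] (a b : EuclideanSpace ℝ ι) : ℝ :=
  if a = 0 ∨ b = 0 then 0 else Real.arccos (⟪a, b⟫ / (‖a‖ * ‖b‖))

noncomputable def zA {ι : Type*} [Fintype ι] (A : Matrix ι ι ℝ)
    (x : EuclideanSpace ℝ ι) : ℂ :=
  ((‖mulVecE A x‖ / ‖x‖ : ℝ) : ℂ) * Complex.exp (Complex.I * (ang (mulVecE A x) x : ℝ))

noncomputable def SRG {ι : Type*} [Fintype ι] (A : Matrix ι ι ℝ) : Set ℂ :=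
  {z | ∃ x : EuclideanSpace ℝ ι, x ≠ 0 ∧ (z = zA A x ∨ z = (starRingEnd ℂ) (zA A x))}

theorem stmt4 (a₁ b₁ b₂ a₂ : ℝ) (x : EuclideanSpace ℝ (Fin 2)) (hx : x ≠ 0) :
    let A : Matrix (Fin 2) (Fin 2) ℝ := !![a₁, b₁; b₂, a₂]
    let c : ℂ := (((a₁ + a₂) / 2 : ℝ) : ℂ) + (((b₁ - b₂) / 2 : ℝ) : ℂ) * Complex.I
    let r : ℝ := Real.sqrt (((a₁ - a₂) / 2) ^ 2 + ((b₁ + b₂) / 2) ^ 2)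
    ‖zA A x - c‖ = r ∨ ‖zA A x - (starRingEnd ℂ) c‖ = r := by
  intro A c r
  set u := x 0 with hu
  set v := x 1 with hv
  set y := mulVecE A x with hydef
  have hy0 : y 0 = a₁ * u + b₁ * v := by
    simp [hydef, mulVecE, Matrix.mulVec, dotProduct, Fin.sum_univ_two, A, hu, hv]
  have hy1 : y 1 = b₂ * u + a₂ * v := by
    simp [hydef, mulVecE, Matrix.mulVec, dotProduct, Fin.sum_univ_two, A, hu, hv]
  set X : ℝ := u ^ 2 + v ^ 2 with hXdef
  have hX0 : 0 < X := by
    rcases lt_or_eq_of_le (by positivity : (0:ℝ) ≤ X) with h | h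
    · exact h
    · exfalso; apply hx
      have h0 : u = 0 ∧ v = 0 := by constructor <;> nlinarith [sq_nonneg u, sq_nonneg v]
      ext i; fin_cases i <;> simp [← hu, ← hv, h0.1, h0.2]
  have hnx2 : ‖x‖ ^ 2 = X := by
    rw [EuclideanSpace.real_norm_sq_eq]
    simp [PiLp.inner_apply, RCLike.inner_apply, Fin.sum_univ_two, hXdef, ← hu, ← hv]
  set P : ℝ := y 0 * u + y 1 * v with hPdef
  set C : ℝ := y 0 * v - y 1 * u with hCdef
  have hkey : (P - (a₁ + a₂) / 2 * X) ^ 2 + (C - (b₁ - b₂) / 2 * X) ^ 2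
      = (((a₁ - a₂) / 2) ^ 2 + ((b₁ + b₂) / 2) ^ 2) * X ^ 2 := by
    rw [hPdef, hCdef, hy0, hy1, hXdef]; ring
  have hinner : ⟪y, x⟫ = P := by
    simp [PiLp.inner_apply, RCLike.inner_apply, Fin.sum_univ_two, hPdef, ← hu, ← hv]; ring
  have hny2 : ‖y‖ ^ 2 = y 0 ^ 2 + y 1 ^ 2 := by
    rw [EuclideanSpace.real_norm_sq_eq]
    simp [PiLp.inner_apply, RCLike.inner_apply, Fin.sum_univ_two]
  have hlag : ‖y‖ ^ 2 * ‖x‖ ^ 2 = P ^ 2 + C ^ 2 := by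
    rw [hny2, hnx2, hPdef, hCdef, hXdef]; ring
  have hnx : ‖x‖ ≠ 0 := by
    intro h; rw [h] at hnx2; simp at hnx2; linarith [hnx2 ▸ hX0]
  have hxpos : 0 < ‖x‖ := lt_of_le_of_ne (norm_nonneg x) (Ne.symm hnx)
  by_cases hy : y = 0
  · -- Ax = 0 case: z = 0 and |c| = r
    left
    have hz : zA A x = 0 := by
      simp [zA, ← hydef, hy]
    have hP0 : P = 0 := by simp [hPdef, hy]
    have hC0 : C = 0 := by simp [hCdef, hy]
    rw [hz, zero_sub]
    rw [show -c = ↑(-((a₁ + a₂) / 2)) + ↑(-((b₁ - b₂) / 2)) * Complex.I by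
      simp [c]; push_cast; ring]
    rw [Complex.norm_add_mul_I]
    have hX2 : X ^ 2 ≠ 0 := by positivity
    have h1 := hkey
    rw [hP0, hC0] at h1
    have h3 : (((a₁ + a₂) / 2) ^ 2 + ((b₁ - b₂) / 2) ^ 2) * X ^ 2
        = (((a₁ - a₂) / 2) ^ 2 + ((b₁ + b₂) / 2) ^ 2) * X ^ 2 := by
      linear_combination h1
    have h2 := mul_right_cancel₀ hX2 h3
    congr 1
    linear_combination h2
  · -- Ax ≠ 0 case
    have hny : ‖y‖ ≠ 0 := by simpa using hy
    have hypos : 0 < ‖y‖ := lt_of_le_of_ne (norm_nonneg y) (Ne.symm hny)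
    set d : ℝ := ⟪y, x⟫ / (‖y‖ * ‖x‖) with hddef
    have hang : ang y x = Real.arccos d := by
      rw [ang, if_neg (by push_neg; exact ⟨hy, hx⟩)]
    have hd1 : d ≤ 1 := by
      rw [hddef, div_le_one (by positivity)]
      exact real_inner_le_norm y x
    have hdm1 : -1 ≤ d := by
      rw [hddef, le_div_iff₀ (by positivity)]
      have h := (abs_le.mp (abs_real_inner_le_norm y x)).1
      linarith
    have hcos : Real.cos (Real.arccos d) = d := Real.cos_arccos hdm1 hd1
    have hsin : Real.sin (Real.arccos d) = Real.sqrt (1 - d ^ 2) := Real.sin_arccos d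
    set θ : ℝ := Real.arccos d with hθ
    have hzA : zA A x = ↑(‖y‖ / ‖x‖ * Real.cos θ) + ↑(‖y‖ / ‖x‖ * Real.sin θ) * Complex.I := by
      rw [zA, ← hydef, hang, mul_comm Complex.I, Complex.exp_mul_I]
      push_cast [Complex.ofReal_cos, Complex.ofReal_sin]
      ring
    have he : ‖y‖ / ‖x‖ * Real.cos θ = P / X := by
      rw [hcos, hddef, hinner, ← hnx2]
      field_simp
    have h1d : 1 - d ^ 2 = (C / (‖y‖ * ‖x‖)) ^ 2 := by
      rw [hddef, hinner, div_pow, div_pow]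
      field_simp
      linear_combination hlag
    have hf : ‖y‖ / ‖x‖ * Real.sin θ = |C| / X := by
      rw [hsin, h1d, Real.sqrt_sq_eq_abs, abs_div, abs_mul, abs_of_pos hypos,
        abs_of_pos hxpos, ← hnx2]
      field_simp
    have hcc : (starRingEnd ℂ) c =
        ↑((a₁ + a₂) / 2) + ↑(-((b₁ - b₂) / 2)) * Complex.I := by
      have hc : c = ↑((a₁ + a₂) / 2) + ↑((b₁ - b₂) / 2) * Complex.I := rfl
      rw [hc, map_add, _root_.map_mul, Complex.conj_ofReal, Complex.conj_ofReal, Complex.conj_I]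
      push_cast; ring
    have hr : r = Real.sqrt (((a₁ - a₂) / 2) ^ 2 + ((b₁ + b₂) / 2) ^ 2) := rfl
    have hX2 : (X:ℝ) ≠ 0 := ne_of_gt hX0
    have hX2' : u ^ 2 + v ^ 2 ≠ 0 := by rw [← hXdef]; exact hX2
    have hmain : (P / X - (a₁ + a₂) / 2) ^ 2 + (C / X - (b₁ - b₂) / 2) ^ 2
        = ((a₁ - a₂) / 2) ^ 2 + ((b₁ + b₂) / 2) ^ 2 := by
      rw [hPdef, hCdef, hy0, hy1, hXdef]
      field_simp
      ring
    rcases le_or_gt 0 C with hC | hC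
    · left
      have habs : |C| = C := abs_of_nonneg hC
      have hzz : zA A x - c =
          ↑(P / X - (a₁ + a₂) / 2) + ↑(C / X - (b₁ - b₂) / 2) * Complex.I := by
        rw [hzA, he, hf, habs, show c = ↑((a₁ + a₂) / 2) + ↑((b₁ - b₂) / 2) * Complex.I from rfl]
        push_cast
        ring
      rw [hzz, Complex.norm_add_mul_I, hmain, hr]
    · right
      have habs : |C| = -C := abs_of_neg hC
      have hzz : zA A x - (starRingEnd ℂ) c =
          ↑(P / X - (a₁ + a₂) / 2) + ↑(-(C / X - (b₁ - b₂) / 2)) * Complex.I := by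
        rw [hzA, he, hf, habs, hcc]
        push_cast
        ring
      rw [hzz, Complex.norm_add_mul_I, neg_sq, hmain, hr]
end

section
/- Let A ∈ ℝ^{n×n} and let u, v ∈ ℝ^n be nonzero vectors satisfying ⟨u,v⟩ = ⟨Au,v⟩ = ⟨u,Av⟩ = ⟨Au,Av⟩ = 0. Suppose t, r ∈ ℝ are such that both z_A(u) and z_A(v) lie on the circle of radius r centered at (t,0), i.e. (Re z_A(u) − t)² + (Im z_A(u))² = r² and likewise for v. Then for all α₁, α₂ ∈ ℝ with w = α₁u + α₂v ≠ 0, the point z_A(w) also lies on this circle: (Re z_A(w) − t)² + (Im z_A(w))² = r². -/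
/-! The circle condition for `z_A(x)` says `|z_A(x) - t| = r`, and `|z_A(x) - t| = ‖(A - t)x‖ / ‖x‖`.
So it reads `‖(A - t)x‖² = r² ‖x‖²`, a quadratic condition in `x`. The four orthogonality
hypotheses make both `u, v` and `(A - t)u, (A - t)v` orthogonal, and then Pythagoras in the
domain and in the range transfers the condition from `u` and `v` to every `α₁ u + α₂ v`. -/

open Matrix
open scoped RealInnerProductSpace

theorem norm_smul_add_smul_sq_of_inner_eq_zero {E : Type*} [NormedAddCommGroup E]
    [InnerProductSpace ℝ E] {x y : E} (hxy : ⟪x, y⟫ = 0) (a b : ℝ) :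
    ‖a • x + b • y‖ ^ 2 = a ^ 2 * ‖x‖ ^ 2 + b ^ 2 * ‖y‖ ^ 2 := by
  rw [sq, norm_add_sq_eq_norm_sq_add_norm_sq_real (by
    simp [real_inner_smul_left, real_inner_smul_right, hxy])]
  simp only [norm_smul, Real.norm_eq_abs]
  nlinarith [sq_abs a, sq_abs b]

theorem norm_map_add_sq_of_orthogonal {E F : Type*} [NormedAddCommGroup E]
    [InnerProductSpace ℝ E] [NormedAddCommGroup F] [InnerProductSpace ℝ F] (S : E →ₗ[ℝ] F)
    {u v : E} (huv : ⟪u, v⟫ = 0) (hSuv : ⟪S u, S v⟫ = 0) {c : ℝ}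
    (hu : ‖S u‖ ^ 2 = c * ‖u‖ ^ 2) (hv : ‖S v‖ ^ 2 = c * ‖v‖ ^ 2) (a b : ℝ) :
    ‖S (a • u + b • v)‖ ^ 2 = c * ‖a • u + b • v‖ ^ 2 := by
  rw [map_add, map_smul, map_smul, norm_smul_add_smul_sq_of_inner_eq_zero hSuv,
    norm_smul_add_smul_sq_of_inner_eq_zero huv, hu, hv]
  ring

section MatrixZA

variable {ι : Type*} [Fintype ι]

theorem cos_ang_mul_norm_mul_norm (a b : EuclideanSpace ℝ ι) :
    Real.cos (ang a b) * (‖a‖ * ‖b‖) = ⟪a, b⟫ := by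
  by_cases h : a = 0 ∨ b = 0
  · rcases h with rfl | rfl <;> simp
  · rw [ang, if_neg h]
    exact InnerProductGeometry.cos_angle_mul_norm_mul_norm a b

theorem norm_zA (A : Matrix ι ι ℝ) (x : EuclideanSpace ℝ ι) :
    ‖zA A x‖ = ‖mulVecE A x‖ / ‖x‖ := by
  rw [zA, norm_mul, mul_comm Complex.I, Complex.norm_exp_ofReal_mul_I, mul_one,
    Complex.norm_real, Real.norm_of_nonneg (by positivity)]

theorem zA_re (A : Matrix ι ι ℝ) (x : EuclideanSpace ℝ ι) :
    (zA A x).re = ⟪mulVecE A x, x⟫ / ‖x‖ ^ 2 := by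
  rw [zA, mul_comm Complex.I, Complex.re_ofReal_mul, Complex.exp_ofReal_mul_I_re,
    ← cos_ang_mul_norm_mul_norm]
  rcases eq_or_ne ‖x‖ 0 with hx | hx
  · simp [hx]
  · field_simp

theorem sq_dist_zA_ofReal (A : Matrix ι ι ℝ) {x : EuclideanSpace ℝ ι} (hx : x ≠ 0) (t : ℝ) :
    ((zA A x).re - t) ^ 2 + (zA A x).im ^ 2 = ‖mulVecE A x - t • x‖ ^ 2 / ‖x‖ ^ 2 := by
  have hnormSq : (zA A x).re ^ 2 + (zA A x).im ^ 2 = ‖mulVecE A x‖ ^ 2 / ‖x‖ ^ 2 := by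
    rw [← div_pow, ← norm_zA, Complex.sq_norm, Complex.normSq_apply]
    ring
  have hx' : ‖x‖ ≠ 0 := norm_ne_zero_iff.mpr hx
  rw [norm_sub_sq_real, real_inner_smul_right, norm_smul, Real.norm_eq_abs, mul_pow, sq_abs]
  calc ((zA A x).re - t) ^ 2 + (zA A x).im ^ 2
      = ((zA A x).re ^ 2 + (zA A x).im ^ 2) - 2 * t * (zA A x).re + t ^ 2 := by ring
    _ = _ := by rw [hnormSq, zA_re]; field_simp

theorem zA_mem_circle_iff (A : Matrix ι ι ℝ) {x : EuclideanSpace ℝ ι} (hx : x ≠ 0) (t r : ℝ) :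
    ((zA A x).re - t) ^ 2 + (zA A x).im ^ 2 = r ^ 2 ↔
      ‖mulVecE A x - t • x‖ ^ 2 = r ^ 2 * ‖x‖ ^ 2 := by
  rw [sq_dist_zA_ofReal A hx, div_eq_iff (by positivity)]

end MatrixZA

theorem stmt6 {n : ℕ} (A : Matrix (Fin n) (Fin n) ℝ) (u v : EuclideanSpace ℝ (Fin n))
    (hu : u ≠ 0) (hv : v ≠ 0) (h1 : ⟪u, v⟫ = 0) (h2 : ⟪mulVecE A u, v⟫ = 0)
    (h3 : ⟪u, mulVecE A v⟫ = 0) (h4 : ⟪mulVecE A u, mulVecE A v⟫ = 0) (t r : ℝ)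
    (hcu : ((zA A u).re - t) ^ 2 + ((zA A u).im) ^ 2 = r ^ 2)
    (hcv : ((zA A v).re - t) ^ 2 + ((zA A v).im) ^ 2 = r ^ 2)
    (α₁ α₂ : ℝ) (hw : α₁ • u + α₂ • v ≠ 0) :
    ((zA A (α₁ • u + α₂ • v)).re - t) ^ 2 + ((zA A (α₁ • u + α₂ • v)).im) ^ 2 = r ^ 2 := by
  let S := Matrix.toEuclideanLin A - t • LinearMap.id
  have hS : ∀ x, S x = mulVecE A x - t • x := fun _ => rfl
  have hSuv : ⟪S u, S v⟫ = 0 := by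
    simp only [hS, inner_sub_left, inner_sub_right, real_inner_smul_left, real_inner_smul_right,
      h1, h2, h3, h4]
    ring
  rw [zA_mem_circle_iff A hu, ← hS] at hcu
  rw [zA_mem_circle_iff A hv, ← hS] at hcv
  rw [zA_mem_circle_iff A hw, ← hS]
  exact norm_map_add_sq_of_orthogonal S h1 hSuv hcu hcv α₁ α₂
end

section
/- Let A ∈ ℝ^{n×n} and let u, v ∈ ℝ^n be nonzero with ⟨u,v⟩ = ⟨Au,v⟩ = ⟨u,Av⟩ = ⟨Au,Av⟩ = 0. For any s ∈ ℝ between ⟨Au,u⟩/⟨u,u⟩ and ⟨Av,v⟩/⟨v,v⟩ (inclusive), there exist α₁, α₂ ∈ ℝ with w = α₁u + α₂v ≠ 0 such that ⟨Aw,w⟩/⟨w,w⟩ = s. -/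
open Matrix
open scoped RealInnerProductSpace

/-!
On `span {u, v}` the quadratic form `w ↦ ⟪T w, w⟫` is diagonal in the orthogonal basis
`u, v`, so for `w = a • u + b • v` with `‖w‖ = 1` it equals the convex combination
`(a ‖u‖)² R(u) + (b ‖v‖)² R(v)` of the two Rayleigh quotients, with weights summing to `1`.
Any point `s` of the segment `[R(u), R(v)]` is such a combination.
-/

section Rayleigh

variable {E : Type*} [NormedAddCommGroup E] [InnerProductSpace ℝ E]

theorem inner_map_add_smul_of_cross_eq_zero (T : E →ₗ[ℝ] E) {u v : E}
    (hTuv : ⟪T u, v⟫ = 0) (hTvu : ⟪T v, u⟫ = 0) (a b : ℝ) :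
    ⟪T (a • u + b • v), a • u + b • v⟫ = a ^ 2 * ⟪T u, u⟫ + b ^ 2 * ⟪T v, v⟫ := by
  simp only [map_add, map_smul, inner_add_left, inner_add_right, real_inner_smul_left,
    real_inner_smul_right, hTuv, hTvu]
  ring

theorem exists_rayleigh_quotient_eq_of_mem_uIcc (T : E →ₗ[ℝ] E) {u v : E}
    (hu : u ≠ 0) (hv : v ≠ 0) (huv : ⟪u, v⟫ = 0) (hTuv : ⟪T u, v⟫ = 0) (huTv : ⟪u, T v⟫ = 0)
    {s : ℝ} (hs : s ∈ Set.uIcc (⟪T u, u⟫ / ⟪u, u⟫) (⟪T v, v⟫ / ⟪v, v⟫)) :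
    ∃ a b : ℝ, a • u + b • v ≠ 0 ∧
      ⟪T (a • u + b • v), a • u + b • v⟫ / ⟪a • u + b • v, a • u + b • v⟫ = s := by
  rw [← segment_eq_uIcc] at hs
  obtain ⟨p, q, hp, hq, hpq, rfl⟩ := hs
  have hu2 : ⟪u, u⟫ ≠ 0 := inner_self_ne_zero.mpr hu
  have hv2 : ⟪v, v⟫ ≠ 0 := inner_self_ne_zero.mpr hv
  set a := √(p / ⟪u, u⟫)
  set b := √(q / ⟪v, v⟫)
  have ha : a ^ 2 = p / ⟪u, u⟫ := Real.sq_sqrt (div_nonneg hp real_inner_self_nonneg)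
  have hb : b ^ 2 = q / ⟪v, v⟫ := Real.sq_sqrt (div_nonneg hq real_inner_self_nonneg)
  have hnorm : ⟪a • u + b • v, a • u + b • v⟫ = 1 := by
    have h :=
      inner_map_add_smul_of_cross_eq_zero LinearMap.id huv (real_inner_comm u v ▸ huv) a b
    simp only [LinearMap.id_apply] at h
    rw [h, ha, hb, div_mul_cancel₀ _ hu2, div_mul_cancel₀ _ hv2, hpq]
  refine ⟨a, b, fun h => by simp [h] at hnorm, ?_⟩
  rw [hnorm, div_one,
    inner_map_add_smul_of_cross_eq_zero T hTuv (real_inner_comm (T v) u ▸ huTv), ha, hb,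
    smul_eq_mul, smul_eq_mul]
  ring

end Rayleigh

theorem stmt7_general {n : ℕ} (A : Matrix (Fin n) (Fin n) ℝ) (u v : EuclideanSpace ℝ (Fin n))
    (hu : u ≠ 0) (hv : v ≠ 0) (h1 : ⟪u, v⟫ = 0) (h2 : ⟪mulVecE A u, v⟫ = 0)
    (h3 : ⟪u, mulVecE A v⟫ = 0) (s : ℝ)
    (hs : s ∈ Set.uIcc (⟪mulVecE A u, u⟫ / ⟪u, u⟫) (⟪mulVecE A v, v⟫ / ⟪v, v⟫)) :
    ∃ α₁ α₂ : ℝ, α₁ • u + α₂ • v ≠ 0 ∧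
      ⟪mulVecE A (α₁ • u + α₂ • v), α₁ • u + α₂ • v⟫ / ⟪α₁ • u + α₂ • v, α₁ • u + α₂ • v⟫
        = s :=
  exists_rayleigh_quotient_eq_of_mem_uIcc (toEuclideanLin A) hu hv h1 h2 h3 hs

theorem stmt7 {n : ℕ} (A : Matrix (Fin n) (Fin n) ℝ) (u v : EuclideanSpace ℝ (Fin n))
    (hu : u ≠ 0) (hv : v ≠ 0) (h1 : ⟪u, v⟫ = 0) (h2 : ⟪mulVecE A u, v⟫ = 0)
    (h3 : ⟪u, mulVecE A v⟫ = 0) (h4 : ⟪mulVecE A u, mulVecE A v⟫ = 0) (s : ℝ)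
    (hs : s ∈ Set.uIcc (⟪mulVecE A u, u⟫ / ⟪u, u⟫) (⟪mulVecE A v, v⟫ / ⟪v, v⟫)) :
    ∃ α₁ α₂ : ℝ, α₁ • u + α₂ • v ≠ 0 ∧
      ⟪mulVecE A (α₁ • u + α₂ • v), α₁ • u + α₂ • v⟫ / ⟪α₁ • u + α₂ • v, α₁ • u + α₂ • v⟫
        = s :=
  stmt7_general A u v hu hv h1 h2 h3 s hs
end

section
/- Let A ∈ ℝ^{n×n} and let u, v ∈ ℝ^n be nonzero with ⟨u,v⟩ = ⟨Au,v⟩ = ⟨u,Av⟩ = ⟨Au,Av⟩ = 0 and ⟨Au,u⟩/⟨u,u⟩ = ⟨Av,v⟩/⟨v,v⟩. Then for all α₁, α₂ ∈ ℝ with w = α₁u + α₂v ≠ 0, one has ⟨Aw,w⟩/⟨w,w⟩ = ⟨Au,u⟩/⟨u,u⟩, and ‖Aw‖²/‖w‖² lies between ‖Au‖²/‖u‖² and ‖Av‖²/‖v‖². -/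
open Matrix
open scoped RealInnerProductSpace

/-!
Write `w = α₁ u + α₂ v`. The four orthogonality relations kill every cross term, so
`⟪A w, w⟫`, `‖A w‖²` and `‖w‖²` are the combinations with weights `α₁², α₂²` of the
corresponding quantities for `u` and `v`. Both quotients for `w` are therefore weighted
mediants of the quotients for `u` and `v`, and a mediant lies between the two fractions;
when these coincide, it equals them.
-/

theorem mediant_mem_uIcc {K : Type*} [Field K] [LinearOrder K] [IsStrictOrderedRing K]
    {a b s t : K} (p q : K) (ha : 0 < a) (hb : 0 < b) (hs : 0 ≤ s) (ht : 0 ≤ t)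
    (hst : s * a + t * b ≠ 0) :
    (s * p + t * q) / (s * a + t * b) ∈ Set.uIcc (p / a) (q / b) := by
  wlog hpq : p / a ≤ q / b generalizing a b s t p q
  · rw [Set.uIcc_comm, add_comm (s * p), add_comm (s * a)]
    exact this q p hb ha ht hs (by rwa [add_comm]) (le_of_not_ge hpq)
  have hden : 0 < s * a + t * b := lt_of_le_of_ne (by positivity) hst.symm
  have hcross : p * b ≤ q * a := (div_le_div_iff₀ ha hb).1 hpq
  rw [Set.uIcc_of_le hpq, Set.mem_Icc, div_le_div_iff₀ ha hden, div_le_div_iff₀ hden hb]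
  constructor <;>
    nlinarith [mul_le_mul_of_nonneg_left hcross hs, mul_le_mul_of_nonneg_left hcross ht]

theorem real_inner_smul_add_smul_of_inner_eq_zero {E : Type*} [NormedAddCommGroup E]
    [InnerProductSpace ℝ E] {x y x' y' : E} (hxy' : ⟪x, y'⟫ = 0) (hyx' : ⟪y, x'⟫ = 0)
    (a b : ℝ) :
    ⟪a • x + b • y, a • x' + b • y'⟫ = a ^ 2 * ⟪x, x'⟫ + b ^ 2 * ⟪y, y'⟫ := by
  simp only [inner_add_left, inner_add_right, real_inner_smul_left, real_inner_smul_right,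
    hxy', hyx']
  ring

theorem mulVecE_smul_add_smul {ι : Type*} [Fintype ι] (A : Matrix ι ι ℝ)
    (a b : ℝ) (x y : EuclideanSpace ℝ ι) :
    mulVecE A (a • x + b • y) = a • mulVecE A x + b • mulVecE A y := by
  simp only [mulVecE, WithLp.ofLp_add, WithLp.ofLp_smul, mulVec_add, mulVec_smul,
    WithLp.toLp_add, WithLp.toLp_smul]

theorem stmt8 {n : ℕ} (A : Matrix (Fin n) (Fin n) ℝ) (u v : EuclideanSpace ℝ (Fin n))
    (hu : u ≠ 0) (hv : v ≠ 0) (h1 : ⟪u, v⟫ = 0) (h2 : ⟪mulVecE A u, v⟫ = 0)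
    (h3 : ⟪u, mulVecE A v⟫ = 0) (h4 : ⟪mulVecE A u, mulVecE A v⟫ = 0)
    (heq : ⟪mulVecE A u, u⟫ / ⟪u, u⟫ = ⟪mulVecE A v, v⟫ / ⟪v, v⟫)
    (α₁ α₂ : ℝ) (hw : α₁ • u + α₂ • v ≠ 0) :
    ⟪mulVecE A (α₁ • u + α₂ • v), α₁ • u + α₂ • v⟫ / ⟪α₁ • u + α₂ • v, α₁ • u + α₂ • v⟫
      = ⟪mulVecE A u, u⟫ / ⟪u, u⟫ ∧
    ‖mulVecE A (α₁ • u + α₂ • v)‖ ^ 2 / ‖α₁ • u + α₂ • v‖ ^ 2 ∈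
      Set.uIcc (‖mulVecE A u‖ ^ 2 / ‖u‖ ^ 2) (‖mulVecE A v‖ ^ 2 / ‖v‖ ^ 2) := by
  have hww := real_inner_smul_add_smul_of_inner_eq_zero h1
    ((real_inner_comm _ _).trans h1) α₁ α₂
  have hAww := real_inner_smul_add_smul_of_inner_eq_zero h2
    ((real_inner_comm _ _).trans h3) α₁ α₂
  have hAwAw := real_inner_smul_add_smul_of_inner_eq_zero h4
    ((real_inner_comm _ _).trans h4) α₁ α₂
  have hden : α₁ ^ 2 * ⟪u, u⟫ + α₂ ^ 2 * ⟪v, v⟫ ≠ 0 := hww ▸ inner_self_ne_zero.2 hw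
  have hmediant (p q : ℝ) := mediant_mem_uIcc p q (real_inner_self_pos.2 hu)
    (real_inner_self_pos.2 hv) (sq_nonneg α₁) (sq_nonneg α₂) hden
  simp only [← real_inner_self_eq_norm_sq, mulVecE_smul_add_smul, hww, hAww, hAwAw]
  refine ⟨?_, hmediant _ _⟩
  have hrayleigh := hmediant ⟪mulVecE A u, u⟫ ⟪mulVecE A v, v⟫
  rwa [← heq, Set.uIcc_self, Set.mem_singleton_iff] at hrayleigh
end
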